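/- arXiv:1212.2857 — 2 statements merged into one kernel-verified Lean document; each statement's English description precedes it below -/
import Mathlib

section
/- In a Dung argumentation framework, every stable extension is a preferred extension (a maximal admissible set with respect to set inclusion). -/
def conflictFree {Args : Type*} (R : Args → Args → Prop) (B : Set Args) : Prop :=
  ∀ a ∈ B, ∀ b ∈ B, ¬ R a b

def defends {Args : Type*} (R : Args → Args → Prop) (B : Set Args) (b : Args) : Prop :=
  ∀ a, R a b → ∃ c ∈ B, R c a

def admissible {Args : Type*} (R : Args → Args → Prop) (B : Set Args) : Prop :=
  conflictFree R B ∧ ∀ b ∈ B, defends R B b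

def stable {Args : Type*} (R : Args → Args → Prop) (B : Set Args) : Prop :=
  conflictFree R B ∧ ∀ a ∉ B, ∃ b ∈ B, R b a

def preferred {Args : Type*} (R : Args → Args → Prop) (B : Set Args) : Prop :=
  admissible R B ∧ ∀ C, admissible R C → B ⊆ C → B = C

theorem conflictFree.notMem_of_attacks {Args : Type*} {R : Args → Args → Prop} {B : Set Args}
    (h : conflictFree R B) {a b : Args} (hb : b ∈ B) (hab : R a b) : a ∉ B :=
  fun ha => h a ha b hb hab

namespace stable

variable {Args : Type*} {R : Args → Args → Prop} {B : Set Args}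

theorem admissible (h : stable R B) : _root_.admissible R B :=
  ⟨h.1, fun _ hb a hab => h.2 a (h.1.notMem_of_attacks hb hab)⟩

theorem eq_of_subset {C : Set Args} (h : stable R B) (hC : conflictFree R C) (hBC : B ⊆ C) :
    B = C := by
  refine hBC.antisymm fun c hc => ?_
  by_contra hcB
  obtain ⟨b, hb, hbc⟩ := h.2 c hcB
  exact hC.notMem_of_attacks hc hbc (hBC hb)

end stable

theorem stable_is_preferred_general
    {Args : Type*} (R : Args → Args → Prop) (B : Set Args)
    (h : stable R B) : preferred R B :=
  ⟨h.admissible, fun _ hC hBC => h.eq_of_subset hC.1 hBC⟩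

theorem stable_is_preferred
    {Args : Type*} [Fintype Args] (R : Args → Args → Prop) (B : Set Args)
    (h : stable R B) : preferred R B :=
  stable_is_preferred_general R B h
end

section
/- In a finite Dung argumentation framework, every preferred extension is a complete extension. -/
def complete {Args : Type*} (R : Args → Args → Prop) (B : Set Args) : Prop :=
  admissible R B ∧ ∀ b, defends R B b → b ∈ B

/-! Dung's fundamental lemma: an admissible set stays admissible when it absorbs an argument it
defends. A preferred set is maximal among admissible sets, so it must already contain every
argument it defends. -/

section

variable {Args : Type*} {R : Args → Args → Prop} {B C : Set Args} {a b : Args}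

theorem defends.mono (hb : defends R B b) (hBC : B ⊆ C) : defends R C b :=
  fun a hab => (hb a hab).imp fun _ ⟨hc, hca⟩ => ⟨hBC hc, hca⟩

theorem conflictFree.not_attacks_of_defends (hB : conflictFree R B) (hb : defends R B b)
    (ha : a ∈ B) : ¬ R a b := fun hab =>
  let ⟨_, hc, hca⟩ := hb a hab
  hB _ hc a ha hca

theorem admissible.not_attacked_by_of_defends (hB : admissible R B) (hb : defends R B b)
    (ha : a ∈ B) : ¬ R b a := fun hba =>
  let ⟨_, hc, hcb⟩ := hB.2 a ha b hba
  hB.1.not_attacks_of_defends hb hc hcb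

theorem admissible.insert_of_defends (hB : admissible R B) (hb : defends R B b) :
    admissible R (insert b B) := by
  have hbb : ¬ R b b := fun hbb =>
    let ⟨_, hc, hcb⟩ := hb b hbb
    hB.1.not_attacks_of_defends hb hc hcb
  refine ⟨?conflictFree, fun x hx => (?defends : defends R B x).mono (Set.subset_insert b B)⟩
  case conflictFree =>
    rintro x (rfl | hx) y (rfl | hy)
    · exact hbb
    · exact hB.not_attacked_by_of_defends hb hy
    · exact hB.1.not_attacks_of_defends hb hx
    · exact hB.1 x hx y hy
  case defends =>
    rcases hx with rfl | hx
    · exact hb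
    · exact hB.2 x hx

end

theorem preferred_is_complete_general
    {Args : Type*} (R : Args → Args → Prop) (B : Set Args)
    (h : preferred R B) : complete R B := by
  obtain ⟨hB, hmax⟩ := h
  refine ⟨hB, fun b hb => ?_⟩
  rw [hmax _ (hB.insert_of_defends hb) (Set.subset_insert b B)]
  exact Set.mem_insert b B

theorem preferred_is_complete
    {Args : Type*} [Fintype Args] (R : Args → Args → Prop) (B : Set Args)
    (h : preferred R B) : complete R B :=
  preferred_is_complete_general R B h
end
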